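/- Let Q be a quantale, M a Q-module, N a multiplicative filter of Q that is normal over M, and F any multiplicative filter of Q. For x, y ∈ M and n ≥ 1, if x ≼ⁿ_{N + F} y, then there exists z ∈ M with x ≼ⁿ_F z and z ≼¹_N y. -/
import Mathlib


universe u v

/-- A (commutative, integral) quantale: a complete lattice with a commutative monoid
structure whose unit is the top element and whose multiplication distributes over
arbitrary suprema. -/
class IntegralQuantale (Q : Type u) extends CompleteLattice Q, CommMonoid Q where
  one_eq_top : (1 : Q) = ⊤
  mul_sSup : ∀ (a : Q) (S : Set Q), a * sSup S = ⨆ b ∈ S, a * b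

/-- A module over a quantale. -/
class QModule (Q : Type u) [IntegralQuantale Q] (M : Type v) extends
    CompleteLattice M, SMul Q M where
  mul_smul' : ∀ (p q : Q) (m : M), (p * q) • m = p • (q • m)
  top_smul' : ∀ m : M, (⊤ : Q) • m = m
  smul_sSup' : ∀ (q : Q) (S : Set M), S.Nonempty → q • sSup S = ⨆ m ∈ S, q • m
  sSup_smul' : ∀ (S : Set Q) (m : M), S.Nonempty → (⨆ q ∈ S, (q : Q)) • m = ⨆ q ∈ S, q • m

/-- A multiplicative filter of a quantale. -/
def IsMFilter {Q : Type u} [IntegralQuantale Q] (F : Set Q) : Prop :=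
  ⊤ ∈ F ∧ (∀ a ∈ F, ∀ b : Q, a ≤ b → b ∈ F) ∧ ∀ a ∈ F, ∀ b ∈ F, a * b ∈ F

/-- `a ≼¹_F b`: `a` is locally less than `b` in one step; witnessed by a nonempty
family of pairs `(aᵢ, sᵢ)` with `sᵢ ∈ F`, `a ≤ ⨆ aᵢ` and `sᵢ • aᵢ ≤ b`. -/
def stepLE {Q : Type u} {M : Type v} [IntegralQuantale Q] [QModule Q M]
    (F : Set Q) (a b : M) : Prop :=
  ∃ P : Set (M × Q), P.Nonempty ∧ (∀ p ∈ P, p.2 ∈ F) ∧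
    (a ≤ ⨆ p ∈ P, Prod.fst p) ∧ ∀ p ∈ P, p.2 • p.1 ≤ b

/-- `a ≼ⁿ_F b`: locally less than in `n` steps. -/
def nStepLE {Q : Type u} {M : Type v} [IntegralQuantale Q] [QModule Q M]
    (F : Set Q) : ℕ → M → M → Prop
  | 0, a, b => a = b
  | n + 1, a, b => ∃ c : M, stepLE F a c ∧ nStepLE F n c b

/-- `a ≼_F b`: locally less than (in some positive number of steps). -/
def localLE {Q : Type u} {M : Type v} [IntegralQuantale Q] [QModule Q M]
    (F : Set Q) (a b : M) : Prop :=
  ∃ n : ℕ, 1 ≤ n ∧ nStepLE F n a b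

/-- A complete lattice is shrinkable if every inequality `x ≤ ⨆ xᵢ` can be shrunk
to an equality `x = ⨆ yⱼ` with each `yⱼ` below a finite subsupremum of the `xᵢ`. -/
def Shrinkable (L : Type u) [CompleteLattice L] : Prop :=
  ∀ (x : L) (S : Set L), S.Nonempty → x ≤ sSup S →
    ∃ Y : Set L, Y.Nonempty ∧ x = sSup Y ∧
      ∀ y ∈ Y, ∃ T : Finset L, T.Nonempty ∧ ↑T ⊆ S ∧ y ≤ T.sup id

/-- An m-filter `N` is normal over `M`: whenever `s ∈ N` and `s • m ≤ ⨆ S` for a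
nonempty `S ⊆ M`, there is a nonempty family of pairs `(m´ⱼ, sⱼ)` with `sⱼ ∈ N`,
`m ≤ ⨆ m´ⱼ`, and each `sⱼ • m´ⱼ` below a finite subsupremum of `S`. -/
def IsNormalOver {Q : Type u} [IntegralQuantale Q] (M : Type v) [QModule Q M]
    (N : Set Q) : Prop :=
  ∀ s ∈ N, ∀ m : M, ∀ S : Set M, S.Nonempty → s • m ≤ sSup S →
    ∃ P : Set (M × Q), P.Nonempty ∧ (m ≤ ⨆ p ∈ P, Prod.fst p) ∧
      ∀ p ∈ P, p.2 ∈ N ∧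
        ∃ S₀ : Finset M, S₀.Nonempty ∧ ↑S₀ ⊆ S ∧ p.2 • p.1 ≤ S₀.sup id

/-- The sum `N + F` of two multiplicative filters:
`{q : ∃ s ∈ N, ∃ t ∈ F, s * t ≤ q}`. -/
def filterSum {Q : Type u} [IntegralQuantale Q] (N F : Set Q) : Set Q :=
  {q : Q | ∃ s ∈ N, ∃ t ∈ F, s * t ≤ q}


section Aux

variable {Q : Type u} {M : Type v} [IntegralQuantale Q] [QModule Q M]

lemma q_mul_mono_right (c : Q) {a b : Q} (h : a ≤ b) : c * a ≤ c * b := by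
  have h2 : c * sSup {a, b} = ⨆ x ∈ ({a, b} : Set Q), c * x :=
    IntegralQuantale.mul_sSup c {a, b}
  rw [iSup_pair, sSup_pair, sup_eq_right.mpr h] at h2
  rw [h2]; exact le_sup_left

lemma q_mul_le_left (a b : Q) : a * b ≤ a := by
  calc a * b ≤ a * ⊤ := q_mul_mono_right a le_top
    _ = a := by rw [← IntegralQuantale.one_eq_top, mul_one]

lemma m_smul_mono_right (q : Q) {a b : M} (h : a ≤ b) : q • a ≤ q • b := by
  have h2 : q • sSup {a, b} = ⨆ m ∈ ({a, b} : Set M), q • m :=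
    QModule.smul_sSup' q {a, b} ⟨a, by simp⟩
  rw [iSup_pair, sSup_pair, sup_eq_right.mpr h] at h2
  rw [h2]; exact le_sup_left

lemma m_smul_mono_left {p q : Q} (h : p ≤ q) (m : M) : p • m ≤ q • m := by
  have h2 : (⨆ r ∈ ({p, q} : Set Q), r) • m = ⨆ r ∈ ({p, q} : Set Q), r • m :=
    QModule.sSup_smul' {p, q} m ⟨p, by simp⟩
  rw [iSup_pair, iSup_pair, sup_eq_right.mpr h] at h2
  rw [h2]; exact le_sup_left

lemma smul_finsetSup_le (q : Q) (T : Finset M) (hT : T.Nonempty) (c : M)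
    (h : ∀ m ∈ T, q • m ≤ c) : q • T.sup id ≤ c := by
  rw [show T.sup id = sSup (↑T : Set M) from Finset.sup_id_eq_sSup T,
    QModule.smul_sSup' q (↑T : Set M) (Finset.coe_nonempty.mpr hT)]
  exact iSup₂_le fun m hm => h m (by exact_mod_cast hm)

lemma prod_mem_mfilter {α : Type*} (G : Set Q) (hG : IsMFilter G) (s : Finset α)
    (f : α → Q) (hne : s.Nonempty) (h : ∀ a ∈ s, f a ∈ G) : (∏ a ∈ s, f a) ∈ G :=
  Finset.prod_induction_nonempty f (· ∈ G) (fun a b ha hb => hG.2.2 a ha b hb) hne h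

lemma prod_le_of_mem {α : Type*} (s : Finset α) (f : α → Q) {a : α} (ha : a ∈ s) :
    (∏ b ∈ s, f b) ≤ f a := by
  classical
  rw [← Finset.mul_prod_erase s f ha]
  exact q_mul_le_left _ _

/-- From a finite set of "first components" of a step family, extract a single
filter element acting below the target on the whole finite sup. -/
lemma fin_smul_le (G : Set Q) (hG : IsMFilter G) (P₂ : Set (M × Q)) (c : M)
    (hG2 : ∀ p ∈ P₂, p.2 ∈ G) (hc : ∀ p ∈ P₂, p.2 • p.1 ≤ c)
    (S₀ : Finset M) (hne : S₀.Nonempty) (hsub : ↑S₀ ⊆ Prod.fst '' P₂) :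
    ∃ t ∈ G, t • S₀.sup id ≤ c := by
  have hg : ∀ m : M, ∃ qq : Q, m ∈ S₀ → (m, qq) ∈ P₂ := by
    intro m
    by_cases hm : m ∈ S₀
    · obtain ⟨p, hp, hfst⟩ := hsub (by exact_mod_cast hm)
      exact ⟨p.2, fun _ => by simpa [← hfst] using hp⟩
    · exact ⟨⊤, fun h => absurd h hm⟩
  choose g hgm using hg
  refine ⟨∏ m ∈ S₀, g m, prod_mem_mfilter G hG S₀ g hne
    (fun m hm => hG2 _ (hgm m hm)), ?_⟩
  refine smul_finsetSup_le _ _ hne _ fun m hm => ?_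
  calc (∏ m' ∈ S₀, g m') • m ≤ g m • m :=
        m_smul_mono_left (prod_le_of_mem S₀ g hm) m
    _ ≤ c := hc (m, g m) (hgm m hm)

/-- Key normality consequence: if `s ∈ N` and `s • m` is below the sup of the first
components of a `G`-step family into `c`, then `m` can be covered by a family whose
members are pushed below `c` by products `t * s'` with `s' ∈ N`, `t ∈ G`. -/
lemma norm_split (N : Set Q) (_hN : IsMFilter N) (hnorm : IsNormalOver M N)
    (G : Set Q) (hG : IsMFilter G) {s : Q} (hs : s ∈ N) (m c : M)
    (P₂ : Set (M × Q)) (hP₂ : P₂.Nonempty) (hG2 : ∀ p ∈ P₂, p.2 ∈ G)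
    (hc : ∀ p ∈ P₂, p.2 • p.1 ≤ c) (hle : s • m ≤ ⨆ p ∈ P₂, Prod.fst p) :
    ∃ P' : Set (M × Q × Q), P'.Nonempty ∧ (m ≤ ⨆ r ∈ P', Prod.fst r) ∧
      ∀ r ∈ P', r.2.1 ∈ N ∧ r.2.2 ∈ G ∧ (r.2.2 * r.2.1) • r.1 ≤ c := by
  have him : (Prod.fst '' P₂).Nonempty := hP₂.image _
  have hle' : s • m ≤ sSup (Prod.fst '' P₂) := by
    rwa [sSup_image]
  obtain ⟨P, hPne, hmle, hP⟩ := hnorm s hs m (Prod.fst '' P₂) him hle'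
  have hch : ∀ p : M × Q, ∃ t : Q, p ∈ P →
      t ∈ G ∧ (t * p.2) • p.1 ≤ c ∧ p.2 ∈ N := by
    intro p
    by_cases hp : p ∈ P
    · obtain ⟨hp2N, S₀, hS₀ne, hS₀sub, hact⟩ := hP p hp
      obtain ⟨t, htG, htle⟩ := fin_smul_le G hG P₂ c hG2 hc S₀ hS₀ne hS₀sub
      refine ⟨t, fun _ => ⟨htG, ?_, hp2N⟩⟩
      calc (t * p.2) • p.1 = t • (p.2 • p.1) := QModule.mul_smul' t p.2 p.1
        _ ≤ t • S₀.sup id := m_smul_mono_right t hact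
        _ ≤ c := htle
    · exact ⟨⊤, fun h => absurd h hp⟩
  choose t ht using hch
  refine ⟨(fun p => (p.1, p.2, t p)) '' P, hPne.image _, ?_, ?_⟩
  · rw [iSup_image]
    exact hmle
  · rintro r ⟨p, hp, rfl⟩
    exact ⟨(ht p hp).2.2, (ht p hp).1, (ht p hp).2.1⟩

end Aux


section Aux2

variable {Q : Type u} {M : Type v} [IntegralQuantale Q] [QModule Q M]

/-- Splitting one `(N + F)`-step into an `F`-step followed by an `N`-step. -/
lemma step_filterSum_split (N F : Set Q) {a b : M}
    (h : stepLE (filterSum N F) a b) : ∃ w : M, stepLE F a w ∧ stepLE N w b := by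
  obtain ⟨P, hPne, hmem, hale, hact⟩ := h
  have hch : ∀ p : M × Q, ∃ st : Q × Q, p ∈ P →
      st.1 ∈ N ∧ st.2 ∈ F ∧ st.1 * st.2 ≤ p.2 := by
    intro p
    by_cases hp : p ∈ P
    · obtain ⟨s, hs, t, ht, hle⟩ := hmem p hp
      exact ⟨(s, t), fun _ => ⟨hs, ht, hle⟩⟩
    · exact ⟨(⊤, ⊤), fun h => absurd h hp⟩
  choose st hst using hch
  refine ⟨⨆ p ∈ P, (st p).2 • p.1, ⟨(fun p => (p.1, (st p).2)) '' P,
      hPne.image _, ?_, ?_, ?_⟩, ⟨(fun p => ((st p).2 • p.1, (st p).1)) '' P,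
      hPne.image _, ?_, ?_, ?_⟩⟩
  · rintro r ⟨p, hp, rfl⟩; exact (hst p hp).2.1
  · rw [iSup_image]; exact hale
  · rintro r ⟨p, hp, rfl⟩
    exact le_iSup₂ (f := fun p (_ : p ∈ P) => (st p).2 • p.1) p hp
  · rintro r ⟨p, hp, rfl⟩; exact (hst p hp).1
  · rw [iSup_image]
  · rintro r ⟨p, hp, rfl⟩
    calc (st p).1 • ((st p).2 • p.1) = ((st p).1 * (st p).2) • p.1 :=
          (QModule.mul_smul' _ _ _).symm
      _ ≤ p.2 • p.1 := m_smul_mono_left (hst p hp).2.2 p.1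
      _ ≤ b := hact p hp

/-- For each member of an `N`-step family into `b`, cover it (via normality) by a
family adapted to a `G`-step family out of `b`. -/
lemma cover_family (N : Set Q) (hN : IsMFilter N) (hnorm : IsNormalOver M N)
    (G : Set Q) (hG : IsMFilter G) {a b c : M}
    (h1 : stepLE N a b) (h2 : stepLE G b c) :
    ∃ Pt : Set (M × Q × Q), Pt.Nonempty ∧ (a ≤ ⨆ r ∈ Pt, Prod.fst r) ∧
      ∀ r ∈ Pt, r.2.1 ∈ N ∧ r.2.2 ∈ G ∧ (r.2.2 * r.2.1) • r.1 ≤ c := by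
  obtain ⟨P₁, hP₁ne, hP₁N, hale, hact₁⟩ := h1
  obtain ⟨P₂, hP₂ne, hP₂G, hble, hact₂⟩ := h2
  have hch : ∀ p : M × Q, ∃ P' : Set (M × Q × Q), p ∈ P₁ →
      P'.Nonempty ∧ (p.1 ≤ ⨆ r ∈ P', Prod.fst r) ∧
        ∀ r ∈ P', r.2.1 ∈ N ∧ r.2.2 ∈ G ∧ (r.2.2 * r.2.1) • r.1 ≤ c := by
    intro p
    by_cases hp : p ∈ P₁
    · obtain ⟨P', h₁, h₂, h₃⟩ := norm_split N hN hnorm G hG (hP₁N p hp) p.1 c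
        P₂ hP₂ne hP₂G hact₂ (le_trans (hact₁ p hp) hble)
      exact ⟨P', fun _ => ⟨h₁, h₂, h₃⟩⟩
    · exact ⟨∅, fun h => absurd h hp⟩
  choose Pp hPp using hch
  refine ⟨⋃ p ∈ P₁, Pp p, ?_, ?_, ?_⟩
  · obtain ⟨p, hp⟩ := hP₁ne
    obtain ⟨r, hr⟩ := (hPp p hp).1
    exact ⟨r, Set.mem_iUnion₂.mpr ⟨p, hp, hr⟩⟩
  · refine le_trans hale (iSup₂_le fun p hp => le_trans (hPp p hp).2.1 ?_)
    exact iSup₂_le fun r hr =>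
      le_iSup₂ (f := fun r (_ : r ∈ ⋃ p ∈ P₁, Pp p) => Prod.fst r) r
        (Set.mem_iUnion₂.mpr ⟨p, hp, hr⟩)
  · intro r hr
    obtain ⟨p, hp, hrp⟩ := Set.mem_iUnion₂.mp hr
    exact (hPp p hp).2.2 r hrp

/-- Commuting: an `N`-step followed by an `F`-step factors as an `F`-step followed
by an `N`-step. -/
lemma step_swap (N : Set Q) (hN : IsMFilter N) (hnorm : IsNormalOver M N)
    (F : Set Q) (hF : IsMFilter F) {a b c : M}
    (h1 : stepLE N a b) (h2 : stepLE F b c) :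
    ∃ d : M, stepLE F a d ∧ stepLE N d c := by
  obtain ⟨Pt, hne, hale, hprop⟩ := cover_family N hN hnorm F hF h1 h2
  refine ⟨⨆ r ∈ Pt, r.2.2 • r.1, ⟨(fun r => (r.1, r.2.2)) '' Pt,
      hne.image _, ?_, ?_, ?_⟩, ⟨(fun r => (r.2.2 • r.1, r.2.1)) '' Pt,
      hne.image _, ?_, ?_, ?_⟩⟩
  · rintro r ⟨p, hp, rfl⟩; exact (hprop p hp).2.1
  · rw [iSup_image]; exact hale
  · rintro r ⟨p, hp, rfl⟩
    exact le_iSup₂ (f := fun r (_ : r ∈ Pt) => r.2.2 • r.1) p hp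
  · rintro r ⟨p, hp, rfl⟩; exact (hprop p hp).1
  · rw [iSup_image]
  · rintro r ⟨p, hp, rfl⟩
    calc p.2.1 • (p.2.2 • p.1) = (p.2.1 * p.2.2) • p.1 :=
          (QModule.mul_smul' _ _ _).symm
      _ = (p.2.2 * p.2.1) • p.1 := by rw [mul_comm]
      _ ≤ c := (hprop p hp).2.2

/-- Transitivity of `N`-steps for a normal filter `N`. -/
lemma step_trans (N : Set Q) (hN : IsMFilter N) (hnorm : IsNormalOver M N)
    {a b c : M} (h1 : stepLE N a b) (h2 : stepLE N b c) : stepLE N a c := by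
  obtain ⟨Pt, hne, hale, hprop⟩ := cover_family N hN hnorm N hN h1 h2
  refine ⟨(fun r => (r.1, r.2.2 * r.2.1)) '' Pt, hne.image _, ?_, ?_, ?_⟩
  · rintro r ⟨p, hp, rfl⟩
    exact hN.2.2 _ (hprop p hp).2.1 _ (hprop p hp).1
  · rw [iSup_image]; exact hale
  · rintro r ⟨p, hp, rfl⟩; exact (hprop p hp).2.2

/-- Commuting an `N`-step past `n` `F`-steps. -/
lemma nstep_swap (N : Set Q) (hN : IsMFilter N) (hnorm : IsNormalOver M N)
    (F : Set Q) (hF : IsMFilter F) (n : ℕ) :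
    ∀ {a b c : M}, stepLE N a b → nStepLE F n b c →
      ∃ d : M, nStepLE F n a d ∧ stepLE N d c := by
  induction n with
  | zero =>
    intro a b c h1 h2
    have hbc : b = c := h2
    exact ⟨a, rfl, hbc ▸ h1⟩
  | succ n ih =>
    intro a b c h1 h2
    obtain ⟨e, he1, he2⟩ := h2
    obtain ⟨d₁, hd1, hd2⟩ := step_swap N hN hnorm F hF h1 he1
    obtain ⟨d, hdn, hdc⟩ := ih hd2 he2
    exact ⟨d, ⟨d₁, hd1, hdn⟩, hdc⟩

end Aux2

/-- If `N` is normal over `M` and `x ≼ⁿ_{N+F} y`, then there is `z` with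
`x ≼ⁿ_F z ≼¹_N y`. -/
theorem normal_plus_filter_local_preorder {Q : Type u} {M : Type v}
    [IntegralQuantale Q] [QModule Q M]
    (N : Set Q) (hN : IsMFilter N) (hnorm : IsNormalOver M N)
    (F : Set Q) (hF : IsMFilter F)
    (x y : M) (n : ℕ) (hn : 1 ≤ n) (h : nStepLE (filterSum N F) n x y) :
    ∃ z : M, nStepLE F n x z ∧ stepLE N z y := by
  obtain ⟨m, rfl⟩ : ∃ m, n = m + 1 := ⟨n - 1, (Nat.succ_pred_eq_of_pos hn).symm⟩
  clear hn
  induction m generalizing x with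
  | zero =>
    obtain ⟨c, hstep, hc⟩ := h
    have hcy : c = y := hc
    subst hcy
    obtain ⟨w, hw1, hw2⟩ := step_filterSum_split N F hstep
    exact ⟨w, ⟨w, hw1, rfl⟩, hw2⟩
  | succ m ih =>
    obtain ⟨c, hstep, hrest⟩ := h
    obtain ⟨z', hz'1, hz'2⟩ := ih c hrest
    obtain ⟨w, hw1, hw2⟩ := step_filterSum_split N F hstep
    obtain ⟨d, hd1, hd2⟩ := nstep_swap N hN hnorm F hF (m + 1) hw2 hz'1
    exact ⟨d, ⟨w, hw1, hd1⟩, step_trans N hN hnorm hd2 hz'2⟩
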